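/- Let A and B be lattices, let f : A → B be a lattice homomorphism, and let π₀, π₁ : B → A be lattice homomorphisms such that π₀ ∘ f = π₁ ∘ f = id_A. Assume that the congruences of B are exactly the four pairwise distinct elements ⊥, ker π₀, ker π₁, ⊤ and that ker π₀ ∩ ker π₁ = ⊥ (so Con B is isomorphic to the four-element Boolean lattice 2² whose coatoms — equivalently atoms — are ker π₀ and ker π₁). Then there exist u < v in A and an element z ∈ B with f(u) < z < f(v) such that {Θ_B(f(u), z), Θ_B(z, f(v))} = {ker π₀, ker π₁}; in particular f(u) < z < f(v) is a congruence chain of B. -/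

import Mathlib

set_option linter.unusedVariables false

universe u v

/-- A congruence of a lattice: an equivalence relation compatible with `⊔` and `⊓`. -/
structure LatCon (L : Type u) [Lattice L] extends Setoid L where
  sup_comp : ∀ {a b c d : L}, r a b → r c d → r (a ⊔ c) (b ⊔ d)
  inf_comp : ∀ {a b c d : L}, r a b → r c d → r (a ⊓ c) (b ⊓ d)

namespace LatCon

variable {L : Type u} [Lattice L]

theorem ext' {θ ψ : LatCon L} (h : θ.r = ψ.r) : θ = ψ := by
  obtain ⟨⟨r₁, h₁⟩, _, _⟩ := θ
  obtain ⟨⟨r₂, h₂⟩, _, _⟩ := ψ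
  cases h
  rfl

instance : PartialOrder (LatCon L) where
  le θ ψ := ∀ ⦃a b : L⦄, θ.r a b → ψ.r a b
  le_refl θ a b h := h
  le_trans θ₁ θ₂ θ₃ h₁ h₂ a b h := h₂ (h₁ h)
  le_antisymm θ ψ h₁ h₂ :=
    ext' (funext fun a => funext fun b => propext ⟨fun h => h₁ h, fun h => h₂ h⟩)

instance : InfSet (LatCon L) where
  sInf S :=
    { r := fun a b => ∀ θ ∈ S, θ.r a b
      iseqv := ⟨fun a θ _ => θ.iseqv.refl a,
        fun h θ hθ => θ.iseqv.symm (h θ hθ),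
        fun h₁ h₂ θ hθ => θ.iseqv.trans (h₁ θ hθ) (h₂ θ hθ)⟩
      sup_comp := fun h₁ h₂ θ hθ => θ.sup_comp (h₁ θ hθ) (h₂ θ hθ)
      inf_comp := fun h₁ h₂ θ hθ => θ.inf_comp (h₁ θ hθ) (h₂ θ hθ) }

instance : CompleteLattice (LatCon L) :=
  completeLatticeOfInf _ fun S =>
    ⟨fun θ hθ a b h => h θ hθ, fun ψ hψ a b h θ hθ => hψ hθ h⟩

end LatCon

/-- The principal congruence `Θ_L(x, y)` generated by a pair of elements. -/
def latConPrincipal {L : Type u} [Lattice L] (x y : L) : LatCon L :=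
  sInf {θ : LatCon L | θ.r x y}

/-- Compact element of a complete lattice, with the meaning `CompleteLattice.IsCompactElement`
had in Mathlib of December 2024. -/
def CompleteLattice.IsCompactElement {α : Type*} [CompleteLattice α] (k : α) : Prop :=
  ∀ s : Set α, k ≤ sSup s → ∃ t : Finset α, ↑t ⊆ s ∧ k ≤ t.sup id

/-- The (∨,0)-semilattice of compact (i.e., finitely generated) congruences of a lattice. -/
abbrev ConC (L : Type u) [Lattice L] : Type u :=
  {θ : LatCon L // CompleteLattice.IsCompactElement θ}

/-- The congruence of `B` generated by the image of a congruence under a lattice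
homomorphism `f : A → B`; `Con_c f` is the restriction of this map to compact congruences. -/
def conMap {A : Type u} {B : Type v} [Lattice A] [Lattice B] (f : LatticeHom A B)
    (θ : LatCon A) : LatCon B :=
  sInf {ψ : LatCon B | ∀ a b : A, θ.r a b → ψ.r (f a) (f b)}

/-- The kernel congruence of a lattice homomorphism. -/
def latKer {A : Type u} {B : Type v} [Lattice A] [Lattice B] (f : LatticeHom A B) :
    LatCon A where
  r a b := f a = f b
  iseqv := ⟨fun _ => rfl, Eq.symm, Eq.trans⟩
  sup_comp := fun h₁ h₂ => by simp only [map_sup]; rw [h₁, h₂]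
  inf_comp := fun h₁ h₂ => by simp only [map_inf]; rw [h₁, h₂]

/-- A lattice is simple if it has exactly two congruences. -/
def SimpleLat (L : Type u) [Lattice L] : Prop :=
  ∃ θ ψ : LatCon L, θ ≠ ψ ∧ ∀ χ : LatCon L, χ = θ ∨ χ = ψ

/-- A bundled lattice. -/
structure BLat : Type (u + 1) where
  carrier : Type u
  [str : Lattice carrier]

attribute [instance] BLat.str

instance : CoeSort BLat.{u} (Type u) := ⟨BLat.carrier⟩

/-- The order-dual of a bundled lattice. -/
def BLat.dual (X : BLat.{u}) : BLat.{u} := ⟨(↥X)ᵒᵈ⟩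

/-- A bundled bounded lattice. -/
structure BdLat : Type (u + 1) where
  carrier : Type u
  [str : Lattice carrier]
  [bdd : BoundedOrder carrier]

attribute [instance] BdLat.str BdLat.bdd

instance : CoeSort BdLat.{u} (Type u) := ⟨BdLat.carrier⟩

/-- The underlying (bundled) lattice of a bounded lattice. -/
def BdLat.toBLat (X : BdLat.{u}) : BLat.{u} := ⟨X.carrier⟩

/-- A class of lattices is a variety if it is closed under homomorphic images,
sublattices and arbitrary direct products. -/
def IsLatVariety (V : BLat.{u} → Prop) : Prop :=
  (∀ (X Y : BLat.{u}) (f : LatticeHom X Y), Function.Surjective f → V X → V Y) ∧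
  (∀ (X Y : BLat.{u}) (f : LatticeHom X Y), Function.Injective f → V Y → V X) ∧
  (∀ (ι : Type u) (F : ι → BLat.{u}), (∀ i, V (F i)) → V ⟨∀ i, F i⟩)

/-- A class of bounded lattices is a variety if it is closed under homomorphic images
(under 0,1-lattice homomorphisms), bounded sublattices and arbitrary direct products. -/
def IsBddLatVariety (V : BdLat.{u} → Prop) : Prop :=
  (∀ (X Y : BdLat.{u}) (f : BoundedLatticeHom X Y), Function.Surjective f → V X → V Y) ∧
  (∀ (X Y : BdLat.{u}) (f : BoundedLatticeHom X Y), Function.Injective f → V Y → V X) ∧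
  (∀ (ι : Type u) (F : ι → BdLat.{u}), (∀ i, V (F i)) → V ⟨∀ i, F i⟩)

/-- `VarMem K X` states that `X` belongs to the variety `Var K` generated by `K`,
i.e. to every variety containing `K`. -/
def VarMem (K X : BLat.{u}) : Prop :=
  ∀ V : BLat.{u} → Prop, IsLatVariety V → V K → V X

/-- `Con_c A` and `Con_c B` are isomorphic (∨,0)-semilattices; since finite joins and `0` are
determined by the order, this is equivalent to the existence of an order isomorphism. -/
def ConcIso (A : BLat.{u}) (B : BLat.{v}) : Prop :=
  Nonempty (ConC ↥A ≃o ConC ↥B)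

/-!
Since `ker π₀ ⊓ ker π₁ = ⊥`, the map `b ↦ (π₀ b, π₁ b)` embeds `B` into `A × A`, and under this
embedding `f a = (a, a)`. Having no congruences besides `⊥` and `⊤` and meeting in `⊥`,
`ker π₀` and `ker π₁` are atoms of `Con B`. As `ker π₀ ≠ ⊥`, some `b` has
`π₀ b ≠ π₁ b`, and meeting with `f (π₁ b)` if necessary gives `z` with, say, `π₀ z < π₁ z`.
Then `f (π₀ z) < z < f (π₁ z)` is the chain: its first step is collapsed by `π₀` and its second
by `π₁`, so the principal congruences are nonzero and below the atoms `ker π₀`, `ker π₁`.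
-/

namespace LatCon

variable {L : Type u} [Lattice L]

theorem bot_r_iff {a b : L} : (⊥ : LatCon L).r a b ↔ a = b :=
  ⟨fun h => (bot_le : (⊥ : LatCon L) ≤ latKer (LatticeHom.id L)) h,
    fun h => h ▸ (⊥ : LatCon L).iseqv.refl a⟩

theorem inf_r {θ ψ : LatCon L} {a b : L} (hθ : θ.r a b) (hψ : ψ.r a b) : (θ ⊓ ψ).r a b := by
  rintro χ (rfl | rfl) <;> assumption

end LatCon

section Principal

variable {L : Type u} [Lattice L]

theorem latConPrincipal_le {x y : L} {θ : LatCon L} (h : θ.r x y) : latConPrincipal x y ≤ θ :=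
  sInf_le h

theorem latConPrincipal_ne_bot {x y : L} (h : x ≠ y) : latConPrincipal x y ≠ ⊥ := by
  intro he
  have hxy : (latConPrincipal x y).r x y := fun _ hθ => hθ
  exact h (LatCon.bot_r_iff.mp (he ▸ hxy))

end Principal

theorem isAtom_of_forall_eq_bot_or_eq_or_eq_or_eq_top {α : Type*} [Lattice α] [BoundedOrder α]
    {a b : α} (hall : ∀ x : α, x = ⊥ ∨ x = a ∨ x = b ∨ x = ⊤) (hab : a ⊓ b = ⊥)
    (ha : a ≠ ⊥) (hb : b ≠ ⊥) : IsAtom a := by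
  refine ⟨ha, fun x hx => ?_⟩
  rcases hall x with rfl | rfl | rfl | rfl
  · rfl
  · exact absurd hx (lt_irrefl x)
  · exact absurd ((inf_eq_right.mpr hx.le).symm.trans hab) hb
  · exact absurd hx not_top_lt

section Kernels

variable {A : Type u} {B : Type v} [Lattice A] [Lattice B] {π₀ π₁ : LatticeHom B A}

theorem eq_of_latKer_inf_eq_bot (hmeet : latKer π₀ ⊓ latKer π₁ = ⊥) {x y : B}
    (h₀ : π₀ x = π₀ y) (h₁ : π₁ x = π₁ y) : x = y :=
  LatCon.bot_r_iff.mp (hmeet ▸ LatCon.inf_r h₀ h₁)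

theorem le_of_latKer_inf_eq_bot (hmeet : latKer π₀ ⊓ latKer π₁ = ⊥) {x y : B}
    (h₀ : π₀ x ≤ π₀ y) (h₁ : π₁ x ≤ π₁ y) : x ≤ y :=
  inf_eq_left.mp <| eq_of_latKer_inf_eq_bot hmeet
    (by rw [map_inf, inf_eq_left.mpr h₀]) (by rw [map_inf, inf_eq_left.mpr h₁])

theorem exists_ne_of_latKer_ne_bot (hmeet : latKer π₀ ⊓ latKer π₁ = ⊥)
    (h₀ : latKer π₀ ≠ ⊥) : ∃ b, π₀ b ≠ π₁ b := by
  by_contra! hπ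
  refine h₀ (le_bot_iff.mp fun x y (hxy : π₀ x = π₀ y) => ?_)
  exact LatCon.bot_r_iff.mpr (eq_of_latKer_inf_eq_bot hmeet hxy (by rw [← hπ, ← hπ, hxy]))

variable (f : LatticeHom A B) (hπ₀ : ∀ a, π₀ (f a) = a) (hπ₁ : ∀ a, π₁ (f a) = a)
include hπ₀ hπ₁

theorem exists_lt_or_lt_of_ne {b : B} (hb : π₀ b ≠ π₁ b) :
    ∃ z, π₀ z < π₁ z ∨ π₁ z < π₀ z := by
  by_cases hle : π₁ b ≤ π₀ b
  · exact ⟨b, .inr (lt_of_le_of_ne hle hb.symm)⟩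
  · refine ⟨b ⊓ f (π₁ b), .inl ?_⟩
    rwa [map_inf, map_inf, hπ₀, hπ₁, inf_idem, inf_lt_right]

theorem exists_congruence_chain_of_lt (hmeet : latKer π₀ ⊓ latKer π₁ = ⊥)
    (hκ₀ : IsAtom (latKer π₀)) (hκ₁ : IsAtom (latKer π₁)) {z : B} (hz : π₀ z < π₁ z) :
    ∃ u v : A, u < v ∧ ∃ z : B, f u < z ∧ z < f v ∧
      ({latConPrincipal (f u) z, latConPrincipal z (f v)} : Set (LatCon B)) =
        {latKer π₀, latKer π₁} := by
  have hne₀ : f (π₀ z) ≠ z := fun h => hz.ne (by simpa [hπ₁] using congrArg π₁ h)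
  have hne₁ : z ≠ f (π₁ z) := fun h => hz.ne (by simpa [hπ₀] using congrArg π₀ h)
  have hle₀ : f (π₀ z) ≤ z :=
    le_of_latKer_inf_eq_bot hmeet (by rw [hπ₀]) (by rw [hπ₁]; exact hz.le)
  have hle₁ : z ≤ f (π₁ z) :=
    le_of_latKer_inf_eq_bot hmeet (by rw [hπ₀]; exact hz.le) (by rw [hπ₁])
  have hΘ₀ : latConPrincipal (f (π₀ z)) z = latKer π₀ :=
    (hκ₀.le_iff_eq (latConPrincipal_ne_bot hne₀)).mp (latConPrincipal_le (hπ₀ (π₀ z)))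
  have hΘ₁ : latConPrincipal z (f (π₁ z)) = latKer π₁ :=
    (hκ₁.le_iff_eq (latConPrincipal_ne_bot hne₁)).mp
      (latConPrincipal_le (hπ₁ (π₁ z)).symm)
  exact ⟨π₀ z, π₁ z, hz, z, lt_of_le_of_ne hle₀ hne₀, lt_of_le_of_ne hle₁ hne₁, by
    rw [hΘ₀, hΘ₁]⟩

end Kernels

theorem exists_congruence_chain_general
    (A : Type u) (B : Type v) [Lattice A] [Lattice B]
    (f : LatticeHom A B) (π₀ π₁ : LatticeHom B A)
    (hπ₀ : ∀ a, π₀ (f a) = a) (hπ₁ : ∀ a, π₁ (f a) = a)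
    (hbot₀ : (⊥ : LatCon B) ≠ latKer π₀) (hbot₁ : (⊥ : LatCon B) ≠ latKer π₁)
    (hall : ∀ θ : LatCon B, θ = ⊥ ∨ θ = latKer π₀ ∨ θ = latKer π₁ ∨ θ = ⊤)
    (hmeet : latKer π₀ ⊓ latKer π₁ = ⊥) :
    ∃ u v : A, u < v ∧ ∃ z : B, f u < z ∧ z < f v ∧
      ({latConPrincipal (f u) z, latConPrincipal z (f v)} : Set (LatCon B)) =
        {latKer π₀, latKer π₁} := by
  have hall' : ∀ θ : LatCon B, θ = ⊥ ∨ θ = latKer π₁ ∨ θ = latKer π₀ ∨ θ = ⊤ := fun θ => by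
    rcases hall θ with h | h | h | h <;> tauto
  have hmeet' : latKer π₁ ⊓ latKer π₀ = ⊥ := inf_comm (latKer π₀) _ ▸ hmeet
  have hκ₀ : IsAtom (latKer π₀) :=
    isAtom_of_forall_eq_bot_or_eq_or_eq_or_eq_top hall hmeet hbot₀.symm hbot₁.symm
  have hκ₁ : IsAtom (latKer π₁) :=
    isAtom_of_forall_eq_bot_or_eq_or_eq_or_eq_top hall' hmeet' hbot₁.symm hbot₀.symm
  obtain ⟨b, hb⟩ := exists_ne_of_latKer_ne_bot hmeet hbot₀.symm
  obtain ⟨z, hz | hz⟩ := exists_lt_or_lt_of_ne f hπ₀ hπ₁ hb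
  · exact exists_congruence_chain_of_lt f hπ₀ hπ₁ hmeet hκ₀ hκ₁ hz
  · obtain ⟨u, v, huv, w, hu, hv, hΘ⟩ :=
      exists_congruence_chain_of_lt f hπ₁ hπ₀ hmeet' hκ₁ hκ₀ hz
    exact ⟨u, v, huv, w, hu, hv, hΘ.trans (Set.pair_comm _ _)⟩

/-- Let `f : A → B`, `π₀, π₁ : B → A` be lattice homomorphisms with `π₀ ∘ f = π₁ ∘ f = id`,
such that `B` has exactly the four distinct congruences `⊥`, `ker π₀`, `ker π₁`, `⊤`, with
`ker π₀ ⊓ ker π₁ = ⊥` (so `Con B ≅ 2²` with coatoms `ker π₀` and `ker π₁`). Then there are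
`u < v` in `A` and `z ∈ B` with `f u < z < f v` such that
`{Θ_B(f u, z), Θ_B(z, f v)} = {ker π₀, ker π₁}`; that is, `f u < z < f v` is a congruence
chain of `B`. -/
theorem exists_congruence_chain
    (A : Type u) (B : Type v) [Lattice A] [Lattice B]
    (f : LatticeHom A B) (π₀ π₁ : LatticeHom B A)
    (hπ₀ : ∀ a, π₀ (f a) = a) (hπ₁ : ∀ a, π₁ (f a) = a)
    (hbot₀ : (⊥ : LatCon B) ≠ latKer π₀) (hbot₁ : (⊥ : LatCon B) ≠ latKer π₁)
    (hbottop : (⊥ : LatCon B) ≠ ⊤)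
    (h₀₁ : latKer π₀ ≠ latKer π₁)
    (htop₀ : latKer π₀ ≠ ⊤) (htop₁ : latKer π₁ ≠ ⊤)
    (hall : ∀ θ : LatCon B, θ = ⊥ ∨ θ = latKer π₀ ∨ θ = latKer π₁ ∨ θ = ⊤)
    (hmeet : latKer π₀ ⊓ latKer π₁ = ⊥) :
    ∃ u v : A, u < v ∧ ∃ z : B, f u < z ∧ z < f v ∧
      ({latConPrincipal (f u) z, latConPrincipal z (f v)} : Set (LatCon B)) =
        {latKer π₀, latKer π₁} :=
  exists_congruence_chain_general A B f π₀ π₁ hπ₀ hπ₁ hbot₀ hbot₁ hall hmeet
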